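/- arXiv:1611.07097 — 9 statements merged into one kernel-verified Lean document; each statement's English description precedes it below -/
import Mathlib

section
/- Block Lyapunov/Sylvester identity: Suppose Γ_L Zᴴ + Z Γ_L = XXᴴ − YYᴴ, Γ_R W + Wᴴ Γ_R = UᴴU − VᴴV, and ΓW − ZΓ = XV − YU. Then, with 𝚪 := [[Γ_L, Γ],[Γᴴ, Γ_R]], A := [[−Zᴴ, 0],[0, W]], C := [[−Xᴴ, V],[−Yᴴ, U]], and J := diag(I_p, −I_m), one has 𝚪A + Aᴴ𝚪 = −CᴴJC. -/
/-!
Both sides are 2×2 block matrices. Block by block, the identity is the Lyapunov equation for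
`Γ_L`, the Sylvester equation for `Γ`, its conjugate transpose, and the Lyapunov equation for
`Γ_R`.
-/

open Matrix

namespace Matrix

variable {l n o k : Type*} [Fintype l] [Fintype n] {α : Type*} [Ring α] [StarRing α]

theorem fromBlocks_mul_blockDiag_add_conjTranspose_mul
    (G₁₁ : Matrix l l α) (G₁₂ : Matrix l n α) (G₂₁ : Matrix n l α) (G₂₂ : Matrix n n α)
    (A₁ : Matrix l l α) (A₂ : Matrix n n α) :
    fromBlocks G₁₁ G₁₂ G₂₁ G₂₂ * fromBlocks A₁ 0 0 A₂
        + (fromBlocks A₁ 0 0 A₂)ᴴ * fromBlocks G₁₁ G₁₂ G₂₁ G₂₂ =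
      fromBlocks (G₁₁ * A₁ + A₁ᴴ * G₁₁) (G₁₂ * A₂ + A₁ᴴ * G₁₂)
        (G₂₁ * A₁ + A₂ᴴ * G₂₁) (G₂₂ * A₂ + A₂ᴴ * G₂₂) := by
  simp only [fromBlocks_conjTranspose, conjTranspose_zero, fromBlocks_multiply, fromBlocks_add,
    Matrix.mul_zero, Matrix.zero_mul, add_zero, zero_add]

theorem fromBlocks_conjTranspose_mul_signature_mul_self [DecidableEq l] [DecidableEq n]
    (P : Matrix l o α) (Q : Matrix l k α) (R : Matrix n o α) (S : Matrix n k α) :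
    (fromBlocks P Q R S)ᴴ * (fromBlocks 1 0 0 (-1) : Matrix (l ⊕ n) (l ⊕ n) α)
        * fromBlocks P Q R S =
      fromBlocks (Pᴴ * P - Rᴴ * R) (Pᴴ * Q - Rᴴ * S) (Qᴴ * P - Sᴴ * R) (Qᴴ * Q - Sᴴ * S) := by
  simp [fromBlocks_conjTranspose, fromBlocks_multiply, sub_eq_add_neg]

end Matrix

/-- **Block Lyapunov/Sylvester identity.**
If `Γ_L Zᴴ + Z Γ_L = XXᴴ − YYᴴ`, `Γ_R W + Wᴴ Γ_R = UᴴU − VᴴV` and `ΓW − ZΓ = XV − YU`,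
then with `Gbig = [[Γ_L, Γ],[Γᴴ, Γ_R]]`, `A = [[−Zᴴ, 0],[0, W]]`, `C = [[−Xᴴ, V],[−Yᴴ, U]]`
and `J = diag(I_p, −I_m)`, one has `GbigA + AᴴGbig = −CᴴJC`. -/
theorem block_lyapunov_sylvester_identity
    (p m nZ nW : ℕ)
    (Z : Matrix (Fin nZ) (Fin nZ) ℂ) (W : Matrix (Fin nW) (Fin nW) ℂ)
    (X : Matrix (Fin nZ) (Fin p) ℂ) (Y : Matrix (Fin nZ) (Fin m) ℂ)
    (U : Matrix (Fin m) (Fin nW) ℂ) (V : Matrix (Fin p) (Fin nW) ℂ)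
    (ΓL : Matrix (Fin nZ) (Fin nZ) ℂ) (ΓR : Matrix (Fin nW) (Fin nW) ℂ)
    (Γ : Matrix (Fin nZ) (Fin nW) ℂ)
    (hL : ΓL * Zᴴ + Z * ΓL = X * Xᴴ - Y * Yᴴ)
    (hR : ΓR * W + Wᴴ * ΓR = Uᴴ * U - Vᴴ * V)
    (hS : Γ * W - Z * Γ = X * V - Y * U) :
    let Gbig : Matrix (Fin nZ ⊕ Fin nW) (Fin nZ ⊕ Fin nW) ℂ := Matrix.fromBlocks ΓL Γ Γᴴ ΓR
    let A : Matrix (Fin nZ ⊕ Fin nW) (Fin nZ ⊕ Fin nW) ℂ := Matrix.fromBlocks (-Zᴴ) 0 0 W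
    let C : Matrix (Fin p ⊕ Fin m) (Fin nZ ⊕ Fin nW) ℂ := Matrix.fromBlocks (-Xᴴ) V (-Yᴴ) U
    let J : Matrix (Fin p ⊕ Fin m) (Fin p ⊕ Fin m) ℂ := Matrix.fromBlocks 1 0 0 (-1)
    Gbig * A + Aᴴ * Gbig = -(Cᴴ * J * C) := by
  intro Gbig A C J
  have hSH : Wᴴ * Γᴴ - Γᴴ * Zᴴ = Vᴴ * Xᴴ - Uᴴ * Yᴴ := by
    simpa only [conjTranspose_sub, conjTranspose_mul] using congrArg conjTranspose hS
  rw [fromBlocks_mul_blockDiag_add_conjTranspose_mul,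
    fromBlocks_conjTranspose_mul_signature_mul_self, fromBlocks_neg, fromBlocks_inj]
  simp only [conjTranspose_neg, conjTranspose_conjTranspose, Matrix.mul_neg, Matrix.neg_mul,
    neg_neg]
  exact ⟨by linear_combination (norm := abel) -hL, by linear_combination (norm := abel) hS,
    by linear_combination (norm := abel) hSH, by linear_combination (norm := abel) hR⟩
end

section
/- Fundamental identity for the resolvent realization (identity (ad1) of the paper): For all λ, ζ ∈ ℂ such that λI_n − A and ζI_n − A are invertible, J − Θ(λ) J Θ(ζ)ᴴ = (λ + conj(ζ)) · C (λI_n − A)⁻¹ Γ⁻¹ (conj(ζ) I_n − Aᴴ)⁻¹ Cᴴ. -/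
/-
Write `R = (λI − A)⁻¹`, `S = (ζ̄I − Aᴴ)⁻¹` and `G = Γ⁻¹`. Since `J² = 1`, the left-hand side
expands to `CRGCᴴ + CGSCᴴ − CRG(CᴴJC)GSCᴴ`, and conjugating the Lyapunov identity by `G` gives
`G(CᴴJC)G = −(AG + GAᴴ)`. The three terms then combine into
`CR[(λI − A)G + G(ζ̄I − Aᴴ) + AG + GAᴴ]SCᴴ`, and the bracket is `(λ + ζ̄)G`.
-/

open Matrix
open scoped Matrix

/-- The signature matrix `J = diag(I_p, −I_m)`. -/
def signatureJ (p m : ℕ) : Matrix (Fin p ⊕ Fin m) (Fin p ⊕ Fin m) ℂ :=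
  Matrix.fromBlocks 1 0 0 (-1)

/-- The realization `Θ(λ) = I − C (λI − A)⁻¹ Γ⁻¹ Cᴴ J`. -/
noncomputable def ThetaRealization (n p m : ℕ) (A : Matrix (Fin n) (Fin n) ℂ)
    (C : Matrix (Fin p ⊕ Fin m) (Fin n) ℂ) (Γ : Matrix (Fin n) (Fin n) ℂ) (lam : ℂ) :
    Matrix (Fin p ⊕ Fin m) (Fin p ⊕ Fin m) ℂ :=
  1 - C * (lam • (1 : Matrix (Fin n) (Fin n) ℂ) - A)⁻¹ * Γ⁻¹ * Cᴴ * signatureJ p m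

lemma signatureJ_mul_self (p m : ℕ) : signatureJ p m * signatureJ p m = 1 := by
  simp [signatureJ, Matrix.fromBlocks_multiply, ← Matrix.fromBlocks_one]

lemma signatureJ_conjTranspose (p m : ℕ) : (signatureJ p m)ᴴ = signatureJ p m := by
  simp [signatureJ, Matrix.fromBlocks_conjTranspose]

lemma conjTranspose_ThetaRealization (n p m : ℕ) (A : Matrix (Fin n) (Fin n) ℂ)
    (C : Matrix (Fin p ⊕ Fin m) (Fin n) ℂ) {Γ : Matrix (Fin n) (Fin n) ℂ} (hΓ : Γ.IsHermitian)
    (ζ : ℂ) :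
    (ThetaRealization n p m A C Γ ζ)ᴴ =
      1 - signatureJ p m * C * Γ⁻¹ * (star ζ • (1 : Matrix (Fin n) (Fin n) ℂ) - Aᴴ)⁻¹ * Cᴴ := by
  simp [ThetaRealization, Matrix.conjTranspose_nonsing_inv, signatureJ_conjTranspose, hΓ.eq,
    Matrix.mul_assoc]

lemma sub_one_sub_mul_mul_one_sub_of_mul_self_eq_one {R : Type*} [Ring R] {J : R}
    (hJ : J * J = 1) (X Y : R) :
    J - (1 - X * J) * J * (1 - J * Y) = X + Y - X * J * Y := by
  have hXJJ : (1 - X * J) * J = J - X := by rw [sub_mul, one_mul, mul_assoc, hJ, mul_one]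
  rw [hXJJ, sub_mul, mul_sub, mul_sub, ← mul_assoc J J, hJ]
  noncomm_ring

lemma nonsing_inv_mul_mul_nonsing_inv_of_add_eq_neg {ι R : Type*} [Fintype ι] [DecidableEq ι]
    [CommRing R] {Γ A A' K : Matrix ι ι R} (hΓ : IsUnit Γ.det) (h : Γ * A + A' * Γ = -K) :
    Γ⁻¹ * K * Γ⁻¹ = -(A * Γ⁻¹ + Γ⁻¹ * A') := by
  have hGΓ := Matrix.nonsing_inv_mul Γ hΓ
  have hΓG := Matrix.mul_nonsing_inv Γ hΓ
  calc Γ⁻¹ * K * Γ⁻¹ = -(Γ⁻¹ * (Γ * A + A' * Γ) * Γ⁻¹) := by rw [h]; noncomm_ring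
    _ = -((Γ⁻¹ * Γ) * A * Γ⁻¹ + Γ⁻¹ * A' * (Γ * Γ⁻¹)) := by noncomm_ring
    _ = -(A * Γ⁻¹ + Γ⁻¹ * A') := by rw [hGΓ, hΓG, Matrix.one_mul, Matrix.mul_one]

lemma add_smul_mul_mul_eq_of_resolvents {𝕜 𝔸 : Type*} [CommRing 𝕜] [Ring 𝔸] [Algebra 𝕜 𝔸]
    {lam μ : 𝕜} {A A' R S : 𝔸} (hR : R * (lam • 1 - A) = 1) (hS : (μ • 1 - A') * S = 1)
    (G : 𝔸) :
    (lam + μ) • (R * G * S) = G * S + R * G + R * (A * G + G * A') * S := by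
  have hsplit : (lam + μ) • G = (lam • 1 - A) * G + G * (μ • 1 - A') + (A * G + G * A') := by
    simp only [sub_mul, mul_sub, smul_mul_assoc, mul_smul_comm, one_mul, mul_one, add_smul]
    abel
  calc (lam + μ) • (R * G * S) = R * ((lam + μ) • G) * S := by
        rw [mul_smul_comm, smul_mul_assoc]
    _ = R * (lam • 1 - A) * G * S + R * G * ((μ • 1 - A') * S) + R * (A * G + G * A') * S := by
        rw [hsplit]; noncomm_ring
    _ = G * S + R * G + R * (A * G + G * A') * S := by rw [hR, hS]; noncomm_ring

/-- **Fundamental identity for the resolvent realization** (identity (2.22) of the paper):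
`J − Θ(λ) J Θ(ζ)ᴴ = (λ + conj ζ) · C (λI − A)⁻¹ Γ⁻¹ (conj(ζ) I − Aᴴ)⁻¹ Cᴴ`. -/
theorem fundamental_identity_resolvent_realization
    (n p m : ℕ) (A : Matrix (Fin n) (Fin n) ℂ)
    (C : Matrix (Fin p ⊕ Fin m) (Fin n) ℂ) (Γ : Matrix (Fin n) (Fin n) ℂ)
    (hΓH : Γ.IsHermitian) (hΓinv : IsUnit Γ.det)
    (hLyap : Γ * A + Aᴴ * Γ = -(Cᴴ * signatureJ p m * C))
    (lam ζ : ℂ)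
    (hlam : IsUnit (lam • (1 : Matrix (Fin n) (Fin n) ℂ) - A).det)
    (hζ : IsUnit (ζ • (1 : Matrix (Fin n) (Fin n) ℂ) - A).det) :
    signatureJ p m -
        ThetaRealization n p m A C Γ lam * signatureJ p m *
          (ThetaRealization n p m A C Γ ζ)ᴴ =
      (lam + star ζ) •
        (C * (lam • (1 : Matrix (Fin n) (Fin n) ℂ) - A)⁻¹ * Γ⁻¹ *
          ((star ζ) • (1 : Matrix (Fin n) (Fin n) ℂ) - Aᴴ)⁻¹ * Cᴴ) := by
  have hB : IsUnit (star ζ • (1 : Matrix (Fin n) (Fin n) ℂ) - Aᴴ).det := by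
    have : star ζ • (1 : Matrix (Fin n) (Fin n) ℂ) - Aᴴ = (ζ • 1 - A)ᴴ := by simp
    rw [this, Matrix.det_conjTranspose]
    exact hζ.star
  have hLyapInv := nonsing_inv_mul_mul_nonsing_inv_of_add_eq_neg hΓinv hLyap
  have hsum := add_smul_mul_mul_eq_of_resolvents (Matrix.nonsing_inv_mul _ hlam)
    (Matrix.mul_nonsing_inv _ hB) Γ⁻¹
  rw [conjTranspose_ThetaRealization n p m A C hΓH, ThetaRealization]
  set J := signatureJ p m
  set R := (lam • (1 : Matrix (Fin n) (Fin n) ℂ) - A)⁻¹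
  set S := (star ζ • (1 : Matrix (Fin n) (Fin n) ℂ) - Aᴴ)⁻¹
  set G := Γ⁻¹
  rw [show J * C * G * S * Cᴴ = J * (C * G * S * Cᴴ) by simp only [Matrix.mul_assoc],
    sub_one_sub_mul_mul_one_sub_of_mul_self_eq_one (signatureJ_mul_self p m)]
  have hmid : C * R * G * Cᴴ * J * (C * G * S * Cᴴ) =
      C * R * (G * (Cᴴ * J * C) * G) * S * Cᴴ := by
    simp only [Matrix.mul_assoc]
  calc C * R * G * Cᴴ + C * G * S * Cᴴ - C * R * G * Cᴴ * J * (C * G * S * Cᴴ)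
      = C * (G * S + R * G + R * (A * G + G * Aᴴ) * S) * Cᴴ := by
        rw [hmid, hLyapInv]
        simp only [Matrix.mul_add, Matrix.add_mul, Matrix.mul_neg, Matrix.neg_mul, Matrix.mul_assoc]
        abel
    _ = (lam + star ζ) • (C * R * G * S * Cᴴ) := by
        rw [← hsum, Matrix.mul_smul, Matrix.smul_mul]
        simp only [Matrix.mul_assoc]
end

section
/- Consequences of J-bicontractivity for the (2,2)-block: Let Θ ∈ ℂ^{(p+m)×(p+m)} have blocks Θ₁₁ ∈ ℂ^{p×p}, Θ₁₂ ∈ ℂ^{p×m}, Θ₂₁ ∈ ℂ^{m×p}, Θ₂₂ ∈ ℂ^{m×m}, and suppose J − Θ J Θᴴ is positive semidefinite, where J := diag(I_p, −I_m). Then: (i) Θ₂₂Θ₂₂ᴴ − Θ₂₁Θ₂₁ᴴ − I_m is positive semidefinite; (ii) Θ₂₂ is invertible; (iii) I_m − (Θ₂₂⁻¹Θ₂₁)(Θ₂₂⁻¹Θ₂₁)ᴴ − Θ₂₂⁻¹(Θ₂₂⁻¹)ᴴ is positive semidefinite (so in particular Θ₂₂⁻¹Θ₂₁ is a strict contraction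 and Θ₂₂⁻¹ is a contraction). -/
/-!
The (2,2) block of `J - Θ J Θᴴ` is `Θ₂₂Θ₂₂ᴴ - Θ₂₁Θ₂₁ᴴ - I`, which gives (i) as a principal
submatrix of a positive semidefinite matrix. By (i), `Θ₂₂Θ₂₂ᴴ ≥ I + Θ₂₁Θ₂₁ᴴ` is positive definite,
so `Θ₂₂` is invertible, and the congruence `X ↦ Θ₂₂⁻¹ X (Θ₂₂⁻¹)ᴴ` turns (i) into (iii).
-/

open Matrix
open scoped Matrix ComplexOrder

namespace Matrix

variable {l n R 𝕜 : Type*} [Fintype l] [Fintype n] [DecidableEq n]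

theorem toBlocks₂₂_fromBlocks_one_neg_one_sub [DecidableEq l] [Ring R] [StarRing R]
    (Θ : Matrix (l ⊕ n) (l ⊕ n) R) :
    (fromBlocks 1 0 0 (-1) - Θ * fromBlocks 1 0 0 (-1) * Θᴴ).toBlocks₂₂ =
      Θ.toBlocks₂₂ * Θ.toBlocks₂₂ᴴ - Θ.toBlocks₂₁ * Θ.toBlocks₂₁ᴴ - 1 := by
  conv_lhs => rw [← fromBlocks_toBlocks Θ]
  simp only [fromBlocks_conjTranspose, fromBlocks_multiply, sub_eq_add_neg, fromBlocks_neg,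
    fromBlocks_add, toBlocks_fromBlocks₂₂, Matrix.mul_neg, Matrix.neg_mul, Matrix.mul_zero,
    Matrix.mul_one, zero_add, add_zero]
  abel

theorem posDef_mul_conjTranspose_of_posSemidef_sub_sub_one [RCLike 𝕜]
    {A : Matrix n l 𝕜} {B : Matrix n n 𝕜} (h : (B * Bᴴ - A * Aᴴ - 1).PosSemidef) :
    (B * Bᴴ).PosDef := by
  have hsum := PosDef.posSemidef_add (h.add (posSemidef_self_mul_conjTranspose A)) PosDef.one
  rwa [sub_right_comm, sub_add_cancel, sub_add_cancel] at hsum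

theorem isUnit_det_of_posDef_mul_conjTranspose [RCLike 𝕜] {B : Matrix n n 𝕜} (h : (B * Bᴴ).PosDef) :
    IsUnit B.det :=
  (isUnit_iff_isUnit_det B).mp (isUnit_of_mul_isUnit_left h.isUnit)

theorem nonsing_inv_mul_sub_mul_conjTranspose_nonsing_inv [CommRing R] [StarRing R]
    {A : Matrix n l R} {B : Matrix n n R} (hB : IsUnit B.det) :
    B⁻¹ * (B * Bᴴ - A * Aᴴ - 1) * B⁻¹ᴴ = 1 - (B⁻¹ * A) * (B⁻¹ * A)ᴴ - B⁻¹ * B⁻¹ᴴ := by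
  have hBh : Bᴴ * B⁻¹ᴴ = 1 := by rw [← conjTranspose_mul, nonsing_inv_mul B hB, conjTranspose_one]
  simp only [Matrix.mul_sub, Matrix.sub_mul, conjTranspose_mul, Matrix.mul_one, ← Matrix.mul_assoc,
    nonsing_inv_mul B hB, Matrix.one_mul]
  rw [hBh]

end Matrix

/-- **Consequences of `J`-bicontractivity for the (2,2)-block.** If `J − Θ J Θᴴ ⪰ 0` with
`J = diag(I_p, −I_m)`, then (i) `Θ₂₂Θ₂₂ᴴ − Θ₂₁Θ₂₁ᴴ − I ⪰ 0`, (ii) `Θ₂₂` is invertible, and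
(iii) `I − (Θ₂₂⁻¹Θ₂₁)(Θ₂₂⁻¹Θ₂₁)ᴴ − Θ₂₂⁻¹(Θ₂₂⁻¹)ᴴ ⪰ 0`. -/
theorem J_bicontraction_block22
    (p m : ℕ) (Θ : Matrix (Fin p ⊕ Fin m) (Fin p ⊕ Fin m) ℂ)
    (hJc :
      ((Matrix.fromBlocks 1 0 0 (-1) : Matrix (Fin p ⊕ Fin m) (Fin p ⊕ Fin m) ℂ) -
        Θ * (Matrix.fromBlocks 1 0 0 (-1)) * Θᴴ).PosSemidef) :
    (Θ.toBlocks₂₂ * Θ.toBlocks₂₂ᴴ - Θ.toBlocks₂₁ * Θ.toBlocks₂₁ᴴ - 1).PosSemidef ∧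
      IsUnit Θ.toBlocks₂₂.det ∧
      (1 - (Θ.toBlocks₂₂⁻¹ * Θ.toBlocks₂₁) * (Θ.toBlocks₂₂⁻¹ * Θ.toBlocks₂₁)ᴴ -
          Θ.toBlocks₂₂⁻¹ * (Θ.toBlocks₂₂⁻¹)ᴴ).PosSemidef := by
  have block22 : (Θ.toBlocks₂₂ * Θ.toBlocks₂₂ᴴ - Θ.toBlocks₂₁ * Θ.toBlocks₂₁ᴴ - 1).PosSemidef := by
    rw [← toBlocks₂₂_fromBlocks_one_neg_one_sub]
    exact hJc.submatrix Sum.inr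
  have hdet : IsUnit Θ.toBlocks₂₂.det :=
    isUnit_det_of_posDef_mul_conjTranspose <|
      posDef_mul_conjTranspose_of_posSemidef_sub_sub_one block22
  refine ⟨block22, hdet, ?_⟩
  rw [← nonsing_inv_mul_sub_mul_conjTranspose_nonsing_inv hdet]
  exact block22.mul_mul_conjTranspose_same _
end

section
/- Pointwise invertibility of the denominator of the linear-fractional transform: Let Θ ∈ ℂ^{(p+m)×(p+m)} have blocks Θ₁₁ ∈ ℂ^{p×p}, Θ₁₂ ∈ ℂ^{p×m}, Θ₂₁ ∈ ℂ^{m×p}, Θ₂₂ ∈ ℂ^{m×m} and suppose J − Θ J Θᴴ is positive semidefinite, where J := diag(I_p, −I_m). Then for every G ∈ ℂ^{p×m} with I_m − GᴴG positive semidefinite, the matrix Θ₂₁ G + Θ₂₂ is invertible. -/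
/-!
Write `C = Θ₂₁`, `D = Θ₂₂` and `M = C G + D`. The `(2,2)` block of `J - Θ J Θᴴ ⪰ 0` reads
`D Dᴴ - C Cᴴ - 1 ⪰ 0`, and `Gᴴ G ≤ 1` forces `G Gᴴ ≤ 1`. Hence
`M Dᴴ - C G Mᴴ = (D Dᴴ - C Cᴴ - 1) + C (1 - G Gᴴ) Cᴴ + 1` is positive definite, whereas its
quadratic form vanishes at every vector killed by `Mᴴ`. So `Mᴴ`, and with it `M`, is invertible.
-/

open Matrix
open scoped Matrix ComplexOrder

namespace Matrix

variable {m n k : Type*}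

/-- `[1 G; Gᴴ 1]` has both `1 - Gᴴ G` and `1 - G Gᴴ` as Schur complements. -/
theorem posSemidef_one_sub_mul_conjTranspose [Fintype m] [Fintype n] [DecidableEq m]
    [DecidableEq n] {R : Type*} [CommRing R] [PartialOrder R] [StarRing R] [StarOrderedRing R]
    [NoZeroDivisors R] {G : Matrix m n R} (hG : (1 - Gᴴ * G).PosSemidef) : (1 - G * Gᴴ).PosSemidef := by
  let : Invertible (1 : Matrix m m R) := invertibleOne
  let : Invertible (1 : Matrix n n R) := invertibleOne
  have hblock : (fromBlocks 1 G Gᴴ 1).PosSemidef :=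
    (PosDef.fromBlocks₁₁ G 1 PosDef.one).mpr (by simpa using hG)
  simpa using (PosDef.fromBlocks₂₂ 1 G PosDef.one).mp hblock

theorem toBlocks₂₂_sub {l o α : Type*} [Sub α] (A B : Matrix (m ⊕ n) (l ⊕ o) α) :
    (A - B).toBlocks₂₂ = A.toBlocks₂₂ - B.toBlocks₂₂ :=
  rfl

theorem toBlocks₂₂_signature_sub_mul_signature_mul_conjTranspose [Fintype m] [Fintype n]
    [DecidableEq m] [DecidableEq n] {R : Type*} [CommRing R] [StarRing R]
    (Θ : Matrix (m ⊕ n) (m ⊕ n) R) :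
    (fromBlocks 1 0 0 (-1) - Θ * fromBlocks 1 0 0 (-1) * Θᴴ).toBlocks₂₂ =
      Θ.toBlocks₂₂ * Θ.toBlocks₂₂ᴴ - Θ.toBlocks₂₁ * Θ.toBlocks₂₁ᴴ - 1 := by
  conv_lhs => rw [← fromBlocks_toBlocks Θ]
  simp only [fromBlocks_conjTranspose, fromBlocks_multiply, toBlocks₂₂_sub, toBlocks_fromBlocks₂₂]
  simp only [Matrix.mul_one, Matrix.mul_zero, add_zero, mul_neg, mul_one, zero_add, neg_mul]
  abel

variable {K : Type*} [Field K] [PartialOrder K] [StarRing K]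

theorem isUnit_det_of_posDef_mul_sub_mul_conjTranspose [Fintype n] [DecidableEq n]
    {M A B : Matrix n n K} (h : (M * A - B * Mᴴ).PosDef) : IsUnit M.det := by
  rw [isUnit_iff_ne_zero]
  intro hdet
  obtain ⟨v, hv0, hv⟩ := exists_vecMul_eq_zero_iff.mpr hdet
  have hMv : Mᴴ *ᵥ star v = 0 := by rw [← star_vecMul, hv, star_zero]
  have hpos := h.dotProduct_mulVec_pos (x := star v) (star_ne_zero.mpr hv0)
  rw [star_star, sub_mulVec, ← mulVec_mulVec, ← mulVec_mulVec, hMv, mulVec_zero, sub_zero,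
    dotProduct_mulVec, hv, zero_dotProduct] at hpos
  exact hpos.false

theorem isUnit_det_mul_add_of_posSemidef [Fintype n] [DecidableEq n] [Fintype k] [DecidableEq k]
    [StarOrderedRing K]
    {C : Matrix n k K} {G : Matrix k n K} {D : Matrix n n K}
    (hCD : (D * Dᴴ - C * Cᴴ - 1).PosSemidef) (hG : (1 - G * Gᴴ).PosSemidef) :
    IsUnit (C * G + D).det := by
  refine isUnit_det_of_posDef_mul_sub_mul_conjTranspose (A := Dᴴ) (B := C * G) ?_
  have hsplit : (C * G + D) * Dᴴ - C * G * (C * G + D)ᴴ =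
      (D * Dᴴ - C * Cᴴ - 1) + C * (1 - G * Gᴴ) * Cᴴ + 1 := by
    simp only [conjTranspose_add, conjTranspose_mul, Matrix.add_mul, Matrix.mul_add,
      Matrix.mul_sub, Matrix.sub_mul, Matrix.mul_one, Matrix.mul_assoc]
    abel
  rw [hsplit]
  exact PosDef.posSemidef_add (hCD.add (hG.mul_mul_conjTranspose_same C)) PosDef.one

end Matrix

/-- **Pointwise invertibility of the denominator of the linear-fractional transform.**
If `J − Θ J Θᴴ ⪰ 0` with `J = diag(I_p, −I_m)`, then for every contraction `G`
(`I − GᴴG ⪰ 0`) the matrix `Θ₂₁ G + Θ₂₂` is invertible. -/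
theorem lft_denominator_invertible
    (p m : ℕ) (Θ : Matrix (Fin p ⊕ Fin m) (Fin p ⊕ Fin m) ℂ)
    (hJc :
      ((Matrix.fromBlocks 1 0 0 (-1) : Matrix (Fin p ⊕ Fin m) (Fin p ⊕ Fin m) ℂ) -
        Θ * (Matrix.fromBlocks 1 0 0 (-1)) * Θᴴ).PosSemidef) :
    ∀ G : Matrix (Fin p) (Fin m) ℂ, (1 - Gᴴ * G).PosSemidef →
      IsUnit (Θ.toBlocks₂₁ * G + Θ.toBlocks₂₂).det := by
  intro G hG
  refine isUnit_det_mul_add_of_posSemidef ?_ (posSemidef_one_sub_mul_conjTranspose hG)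
  rw [← toBlocks₂₂_signature_sub_mul_signature_mul_conjTranspose]
  exact hJc.submatrix Sum.inr
end

section
/- Determinant formula for Θ: Let A ∈ ℂ^{n×n}, C ∈ ℂ^{(p+m)×n}, J := diag(I_p, −I_m), and let Γ ∈ ℂ^{n×n} be invertible with ΓA + AᴴΓ = −CᴴJC. Then for every λ ∈ ℂ such that λI_n − A is invertible, det(I_{p+m} − C(λI_n − A)⁻¹Γ⁻¹CᴴJ) = det(λI_n + Aᴴ)/det(λI_n − A). -/
open Matrix
open scoped Matrix

/-!
Sylvester's identity (the matrix determinant lemma) trades `det(I − C(λ − A)⁻¹Γ⁻¹CᴴJ)` for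
`det(Γ(λ − A) − CᴴJC) / det(Γ(λ − A))`, and the Lyapunov equation turns
`Γ(λ − A) − CᴴJC = Γ(λ − A) + ΓA + AᴴΓ` into `(λ + Aᴴ)Γ`; the factors `det Γ` cancel.
-/

namespace Matrix

variable {n k K : Type*} [Fintype n] [DecidableEq n] [Fintype k] [Field K]

theorem mul_smul_one_sub_sub_eq_of_lyapunov {A A' Γ : Matrix n n K} {B : Matrix n k K}
    {C : Matrix k n K} (hLyap : Γ * A + A' * Γ = -(B * C)) (lam : K) :
    Γ * (lam • 1 - A) - B * C = (lam • 1 + A') * Γ := by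
  rw [← neg_neg (B * C), ← hLyap, Matrix.mul_sub, Matrix.add_mul, mul_smul_one, smul_one_mul]
  abel

theorem det_one_sub_mul_resolvent_of_lyapunov [DecidableEq k] {A A' Γ : Matrix n n K}
    {B : Matrix n k K} {C : Matrix k n K} (hΓ : IsUnit Γ.det)
    (hLyap : Γ * A + A' * Γ = -(B * C)) {lam : K}
    (hlam : IsUnit (lam • (1 : Matrix n n K) - A).det) :
    (1 - C * (lam • (1 : Matrix n n K) - A)⁻¹ * Γ⁻¹ * B).det =
      (lam • (1 : Matrix n n K) + A').det / (lam • (1 : Matrix n n K) - A).det := by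
  have hΓM : IsUnit (Γ * (lam • 1 - A)).det := by rw [det_mul]; exact hΓ.mul hlam
  have hdet : ((lam • 1 + A') * Γ).det =
      (Γ * (lam • 1 - A)).det * (1 - C * (lam • 1 - A)⁻¹ * Γ⁻¹ * B).det := by
    rw [← mul_smul_one_sub_sub_eq_of_lyapunov hLyap, sub_eq_add_neg, ← Matrix.neg_mul,
      det_add_mul _ _ hΓM, Matrix.mul_neg, ← sub_eq_add_neg, mul_inv_rev]
    simp only [Matrix.mul_assoc]
  rw [det_mul, det_mul] at hdet
  refine (eq_div_iff hlam.ne_zero).2 (mul_right_cancel₀ hΓ.ne_zero ?_)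
  rw [hdet]
  ring

end Matrix

/-- **Determinant formula for `Θ`.** If `Γ` is invertible and `ΓA + AᴴΓ = −CᴴJC` with
`J = diag(I_p, −I_m)`, then for every `λ` at which `λI − A` is invertible,
`det(I − C(λI − A)⁻¹Γ⁻¹CᴴJ) = det(λI + Aᴴ)/det(λI − A)`. -/
theorem theta_determinant_formula
    (n p m : ℕ) (A : Matrix (Fin n) (Fin n) ℂ)
    (C : Matrix (Fin p ⊕ Fin m) (Fin n) ℂ) (Γ : Matrix (Fin n) (Fin n) ℂ)
    (hΓinv : IsUnit Γ.det)
    (hLyap : Γ * A + Aᴴ * Γ =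
      -(Cᴴ * (Matrix.fromBlocks 1 0 0 (-1) : Matrix (Fin p ⊕ Fin m) (Fin p ⊕ Fin m) ℂ) * C))
    (lam : ℂ)
    (hlam : IsUnit (lam • (1 : Matrix (Fin n) (Fin n) ℂ) - A).det) :
    (1 - C * (lam • (1 : Matrix (Fin n) (Fin n) ℂ) - A)⁻¹ * Γ⁻¹ * Cᴴ *
        (Matrix.fromBlocks 1 0 0 (-1) : Matrix (Fin p ⊕ Fin m) (Fin p ⊕ Fin m) ℂ)).det =
      (lam • (1 : Matrix (Fin n) (Fin n) ℂ) + Aᴴ).det /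
        (lam • (1 : Matrix (Fin n) (Fin n) ℂ) - A).det := by
  simpa only [Matrix.mul_assoc] using det_one_sub_mul_resolvent_of_lyapunov hΓinv hLyap hlam
end

section
/- Inverse formula for ψ: For every z ∈ ℂ such that both zI_n + Wᴴ and zI_n − W are invertible, the matrix ψ(z) := I_m − U P⁻¹ (zI_n + Wᴴ)⁻¹ Uᴴ is invertible and ψ(z)⁻¹ = I_m + U (zI_n − W)⁻¹ P⁻¹ Uᴴ. -/
open Matrix
open scoped Matrix

/-! With `A = zI + Wᴴ` and `B = zI − W`, the Lyapunov equation reads `UᴴU = AP − PB`. Hence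
`ψ(z) = I − U (AP)⁻¹ Uᴴ` and the proposed inverse is `I + U (PB)⁻¹ Uᴴ`, and their product is `I`
by the resolvent-type identity `(AP)⁻¹ (AP − PB) (PB)⁻¹ = (PB)⁻¹ − (AP)⁻¹`. -/

namespace Matrix

variable {m n R : Type*} [Fintype m] [Fintype n] [DecidableEq m] [DecidableEq n] [CommRing R]

theorem one_sub_mul_inv_mul_mul_one_add_mul_inv_mul {x y : Matrix n n R}
    (hxy : IsUnit x ↔ IsUnit y) {U : Matrix m n R} {V : Matrix n m R} (hVU : V * U = x - y) :
    (1 - U * x⁻¹ * V) * (1 + U * y⁻¹ * V) = 1 := by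
  have hres : x⁻¹ * (V * U) * y⁻¹ = y⁻¹ - x⁻¹ := by
    rw [hVU, ← neg_sub y x, Matrix.mul_neg, Matrix.neg_mul, ← inv_sub_inv hxy, neg_sub]
  have hcross : U * x⁻¹ * V * (U * y⁻¹ * V) = U * y⁻¹ * V - U * x⁻¹ * V := by
    calc U * x⁻¹ * V * (U * y⁻¹ * V) = U * (x⁻¹ * (V * U) * y⁻¹) * V := by
          simp only [Matrix.mul_assoc]
      _ = U * y⁻¹ * V - U * x⁻¹ * V := by
          rw [hres, Matrix.mul_sub, Matrix.sub_mul]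
  rw [Matrix.sub_mul, Matrix.one_mul, Matrix.mul_add, Matrix.mul_one, hcross]
  abel

theorem smul_one_add_mul_sub_mul_smul_one_sub (z : R) (P V W : Matrix n n R) :
    (z • 1 + V) * P - P * (z • 1 - W) = P * W + V * P := by
  simp only [Matrix.add_mul, Matrix.mul_sub, Matrix.smul_mul, Matrix.mul_smul, Matrix.one_mul,
    Matrix.mul_one]
  abel

end Matrix

/-- **Inverse formula for `ψ`.** With `PW + WᴴP = UᴴU` and `P` invertible, for every `z`
such that `zI + Wᴴ` and `zI − W` are invertible, the matrix
`ψ(z) = I − U P⁻¹ (zI + Wᴴ)⁻¹ Uᴴ` is invertible with inverse `I + U (zI − W)⁻¹ P⁻¹ Uᴴ`. -/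
theorem psi_inverse_formula
    (n m : ℕ) (W : Matrix (Fin n) (Fin n) ℂ) (U : Matrix (Fin m) (Fin n) ℂ)
    (P : Matrix (Fin n) (Fin n) ℂ) (hP : IsUnit P.det)
    (hLyap : P * W + Wᴴ * P = Uᴴ * U)
    (z : ℂ)
    (h1 : IsUnit (z • (1 : Matrix (Fin n) (Fin n) ℂ) + Wᴴ).det)
    (h2 : IsUnit (z • (1 : Matrix (Fin n) (Fin n) ℂ) - W).det) :
    let ψ : Matrix (Fin m) (Fin m) ℂ :=
      1 - U * P⁻¹ * (z • (1 : Matrix (Fin n) (Fin n) ℂ) + Wᴴ)⁻¹ * Uᴴ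
    IsUnit ψ.det ∧
      ψ⁻¹ = 1 + U * (z • (1 : Matrix (Fin n) (Fin n) ℂ) - W)⁻¹ * P⁻¹ * Uᴴ := by
  intro ψ
  set A := z • (1 : Matrix (Fin n) (Fin n) ℂ) + Wᴴ
  set B := z • (1 : Matrix (Fin n) (Fin n) ℂ) - W
  have hunits : IsUnit (A * P) ↔ IsUnit (P * B) := by
    simp only [isUnit_iff_isUnit_det, det_mul]
    exact iff_of_true (h1.mul hP) (hP.mul h2)
  have hUU : Uᴴ * U = A * P - P * B := by
    rw [← hLyap, smul_one_add_mul_sub_mul_smul_one_sub]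
  have hmul := one_sub_mul_inv_mul_mul_one_add_mul_inv_mul hunits hUU
  simp only [Matrix.mul_inv_rev, ← Matrix.mul_assoc] at hmul
  exact ⟨isUnit_det_of_right_inverse hmul, inv_eq_right_inv hmul⟩
end

section
/- Unitarity of ψ on the imaginary axis: Assume in addition that P is Hermitian. Then for every z ∈ ℂ with Re z = 0 such that zI_n + Wᴴ is invertible, the matrix ψ(z) := I_m − U P⁻¹ (zI_n + Wᴴ)⁻¹ Uᴴ is unitary: ψ(z)ᴴ ψ(z) = I_m and ψ(z) ψ(z)ᴴ = I_m. -/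
open Matrix
open scoped Matrix

/-!
Put `A = zI + Wᴴ`. Since `z̄ = -z`, the Lyapunov equation reads `UᴴU = PAᴴ + AP`.
Sandwiching it as `(Aᴴ)⁻¹P⁻¹ (UᴴU) P⁻¹A⁻¹` or as `P⁻¹A⁻¹ (UᴴU) (Aᴴ)⁻¹P⁻¹` gives
`P⁻¹A⁻¹ + (Aᴴ)⁻¹P⁻¹` in both cases, so `X = UP⁻¹A⁻¹Uᴴ` satisfies `XᴴX = X + Xᴴ = XXᴴ`,
which is exactly the unitarity of `I - X`.
-/

theorem one_sub_mem_unitary {R : Type*} [Ring R] [StarRing R] {x : R}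
    (h₁ : star x * x = x + star x) (h₂ : x * star x = x + star x) :
    1 - x ∈ unitary R := by
  rw [Unitary.mem_iff, star_sub, star_one]
  constructor
  · rw [sub_mul, mul_sub, mul_sub, h₁]; noncomm_ring
  · rw [sub_mul, mul_sub, mul_sub, h₂]; noncomm_ring

theorem Complex.star_eq_neg_of_re_eq_zero {z : ℂ} (hz : z.re = 0) : star z = -z :=
  Complex.ext (by simp [hz]) (by simp)

namespace Matrix

variable {m n K : Type*} [Fintype n] [DecidableEq n] [CommRing K] [StarRing K]

theorem mul_conjTranspose_add_eq_of_star_eq_neg {z : K} (hz : star z = -z)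
    (P W : Matrix n n K) :
    P * (z • 1 + Wᴴ)ᴴ + (z • 1 + Wᴴ) * P = P * W + Wᴴ * P := by
  rw [conjTranspose_add, conjTranspose_smul, conjTranspose_one, conjTranspose_conjTranspose,
    hz, mul_add, add_mul, Matrix.mul_smul, Matrix.smul_mul, Matrix.mul_one, Matrix.one_mul]
  module

variable (U : Matrix m n K) {P A : Matrix n n K}

theorem conjTranspose_mul_inv_mul_inv_mul (hPH : P.IsHermitian) :
    (U * P⁻¹ * A⁻¹ * Uᴴ)ᴴ = U * Aᴴ⁻¹ * P⁻¹ * Uᴴ := by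
  simp only [conjTranspose_mul, conjTranspose_conjTranspose, hPH.inv.eq,
    conjTranspose_nonsing_inv, Matrix.mul_assoc]

theorem conjTranspose_mul_self_eq_add_of_lyapunov [Fintype m]
    (hP : IsUnit P.det) (hA : IsUnit A.det) (hPH : P.IsHermitian) (hU : Uᴴ * U = P * Aᴴ + A * P) :
    (U * P⁻¹ * A⁻¹ * Uᴴ)ᴴ * (U * P⁻¹ * A⁻¹ * Uᴴ) =
      U * P⁻¹ * A⁻¹ * Uᴴ + (U * P⁻¹ * A⁻¹ * Uᴴ)ᴴ := by
  have hAH : IsUnit Aᴴ.det := by rw [det_conjTranspose]; exact hA.star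
  have hsandwich : Aᴴ⁻¹ * P⁻¹ * (Uᴴ * U) * P⁻¹ * A⁻¹ = P⁻¹ * A⁻¹ + Aᴴ⁻¹ * P⁻¹ := by
    simp only [hU, Matrix.mul_add, Matrix.add_mul, Matrix.mul_assoc,
      nonsing_inv_mul_cancel_left _ _ hP, mul_nonsing_inv_cancel_left _ _ hP,
      mul_nonsing_inv _ hA, nonsing_inv_mul _ hAH, Matrix.mul_one, Matrix.one_mul]
  calc _ = U * (Aᴴ⁻¹ * P⁻¹ * (Uᴴ * U) * P⁻¹ * A⁻¹) * Uᴴ := by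
        rw [conjTranspose_mul_inv_mul_inv_mul U hPH]; simp only [Matrix.mul_assoc]
    _ = _ := by
        rw [hsandwich, conjTranspose_mul_inv_mul_inv_mul U hPH]
        simp only [Matrix.mul_add, Matrix.add_mul, Matrix.mul_assoc]

theorem mul_conjTranspose_self_eq_add_of_lyapunov [Fintype m]
    (hP : IsUnit P.det) (hA : IsUnit A.det) (hPH : P.IsHermitian) (hU : Uᴴ * U = P * Aᴴ + A * P) :
    (U * P⁻¹ * A⁻¹ * Uᴴ) * (U * P⁻¹ * A⁻¹ * Uᴴ)ᴴ =
      U * P⁻¹ * A⁻¹ * Uᴴ + (U * P⁻¹ * A⁻¹ * Uᴴ)ᴴ := by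
  have hAH : IsUnit Aᴴ.det := by rw [det_conjTranspose]; exact hA.star
  have hsandwich : P⁻¹ * A⁻¹ * (Uᴴ * U) * Aᴴ⁻¹ * P⁻¹ = P⁻¹ * A⁻¹ + Aᴴ⁻¹ * P⁻¹ := by
    simp only [hU, Matrix.mul_add, Matrix.add_mul, Matrix.mul_assoc,
      nonsing_inv_mul_cancel_left _ _ hA, nonsing_inv_mul_cancel_left _ _ hP,
      mul_nonsing_inv _ hAH, mul_nonsing_inv _ hP, Matrix.mul_one]
  calc _ = U * (P⁻¹ * A⁻¹ * (Uᴴ * U) * Aᴴ⁻¹ * P⁻¹) * Uᴴ := by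
        rw [conjTranspose_mul_inv_mul_inv_mul U hPH]; simp only [Matrix.mul_assoc]
    _ = _ := by
        rw [hsandwich, conjTranspose_mul_inv_mul_inv_mul U hPH]
        simp only [Matrix.mul_add, Matrix.add_mul, Matrix.mul_assoc]

theorem one_sub_mem_unitary_of_lyapunov [Fintype m] [DecidableEq m]
    (hP : IsUnit P.det) (hA : IsUnit A.det) (hPH : P.IsHermitian) (hU : Uᴴ * U = P * Aᴴ + A * P) :
    1 - U * P⁻¹ * A⁻¹ * Uᴴ ∈ unitary (Matrix m m K) :=
  one_sub_mem_unitary (conjTranspose_mul_self_eq_add_of_lyapunov U hP hA hPH hU)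
    (mul_conjTranspose_self_eq_add_of_lyapunov U hP hA hPH hU)

end Matrix

/-- **Unitarity of `ψ` on the imaginary axis.** With `P` Hermitian invertible satisfying
`PW + WᴴP = UᴴU`, the matrix `ψ(z) = I − U P⁻¹ (zI + Wᴴ)⁻¹ Uᴴ` is unitary for every
purely imaginary `z` at which `zI + Wᴴ` is invertible. -/
theorem psi_unitary_on_imaginary_axis
    (n m : ℕ) (W : Matrix (Fin n) (Fin n) ℂ) (U : Matrix (Fin m) (Fin n) ℂ)
    (P : Matrix (Fin n) (Fin n) ℂ) (hP : IsUnit P.det) (hPH : P.IsHermitian)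
    (hLyap : P * W + Wᴴ * P = Uᴴ * U)
    (z : ℂ) (hz : z.re = 0)
    (h1 : IsUnit (z • (1 : Matrix (Fin n) (Fin n) ℂ) + Wᴴ).det) :
    let ψ : Matrix (Fin m) (Fin m) ℂ :=
      1 - U * P⁻¹ * (z • (1 : Matrix (Fin n) (Fin n) ℂ) + Wᴴ)⁻¹ * Uᴴ
    ψᴴ * ψ = 1 ∧ ψ * ψᴴ = 1 :=
  Unitary.mem_iff.mp <| one_sub_mem_unitary_of_lyapunov U hP h1 hPH <| by
    rw [mul_conjTranspose_add_eq_of_star_eq_neg (Complex.star_eq_neg_of_re_eq_zero hz), hLyap]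
end

section
/- Determinant formula for ψ: For every z ∈ ℂ such that zI_n + Wᴴ is invertible, det(I_m − U P⁻¹ (zI_n + Wᴴ)⁻¹ Uᴴ) = det(zI_n − W)/det(zI_n + Wᴴ). -/
open Matrix
open scoped Matrix

/-- Sylvester's identity `det (1 - U X) = det (1 - X U)` moves the correction to the `n × n`
side, where the hypothesis factors it as `1 - P⁻¹ A⁻¹ V U = P⁻¹ A⁻¹ P B`. -/
theorem det_one_sub_mul_inv_mul_inv_mul_of_mul_sub_mul_eq {K : Type*} [Field K]
    {n m : Type*} [Fintype n] [DecidableEq n] [Fintype m] [DecidableEq m] (A P B : Matrix n n K)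
    (U : Matrix m n K) (V : Matrix n m K) (hA : IsUnit A.det) (hP : IsUnit P.det)
    (h : A * P - V * U = P * B) :
    (1 - U * P⁻¹ * A⁻¹ * V).det = B.det / A.det := by
  have hPA : P⁻¹ * A⁻¹ * (A * P) = 1 := by
    rw [Matrix.mul_assoc, ← Matrix.mul_assoc A⁻¹, nonsing_inv_mul A hA, Matrix.one_mul,
      nonsing_inv_mul P hP]
  calc (1 - U * P⁻¹ * A⁻¹ * V).det = (1 - P⁻¹ * A⁻¹ * V * U).det := by
        rw [Matrix.mul_assoc, Matrix.mul_assoc, ← Matrix.mul_assoc P⁻¹,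
          det_one_sub_mul_comm]
    _ = (P⁻¹ * A⁻¹ * (P * B)).det := by
        rw [← h, Matrix.mul_sub, hPA, Matrix.mul_assoc _ V]
    _ = B.det / A.det := by
        rw [det_mul, det_mul, det_mul, det_nonsing_inv, det_nonsing_inv, Ring.inverse_eq_inv,
          Ring.inverse_eq_inv]
        field_simp [hP.ne_zero]

theorem smul_one_add_conjTranspose_mul_sub_eq_of_lyapunov {R : Type*} [CommRing R] [StarRing R]
    {n m : Type*} [Fintype n] [DecidableEq n] [Fintype m] (W P : Matrix n n R)
    (U : Matrix m n R) (hLyap : P * W + Wᴴ * P = Uᴴ * U) (z : R) :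
    (z • (1 : Matrix n n R) + Wᴴ) * P - Uᴴ * U = P * (z • (1 : Matrix n n R) - W) := by
  rw [← hLyap]
  noncomm_ring

/-- **Determinant formula for `ψ`.** With `P` invertible satisfying `PW + WᴴP = UᴴU`,
for every `z` such that `zI + Wᴴ` is invertible,
`det(I − U P⁻¹ (zI + Wᴴ)⁻¹ Uᴴ) = det(zI − W)/det(zI + Wᴴ)`. -/
theorem psi_determinant_formula
    (n m : ℕ) (W : Matrix (Fin n) (Fin n) ℂ) (U : Matrix (Fin m) (Fin n) ℂ)
    (P : Matrix (Fin n) (Fin n) ℂ) (hP : IsUnit P.det)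
    (hLyap : P * W + Wᴴ * P = Uᴴ * U)
    (z : ℂ)
    (h1 : IsUnit (z • (1 : Matrix (Fin n) (Fin n) ℂ) + Wᴴ).det) :
    (1 - U * P⁻¹ * (z • (1 : Matrix (Fin n) (Fin n) ℂ) + Wᴴ)⁻¹ * Uᴴ).det =
      (z • (1 : Matrix (Fin n) (Fin n) ℂ) - W).det /
        (z • (1 : Matrix (Fin n) (Fin n) ℂ) + Wᴴ).det :=
  det_one_sub_mul_inv_mul_inv_mul_of_mul_sub_mul_eq _ P _ U Uᴴ h1 hP
    (smul_one_add_conjTranspose_mul_sub_eq_of_lyapunov W P U hLyap z)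
end

section
/- Sylvester equation for the simple-multiplicity coupling matrix: Assume the compatibility condition x_i v_j = y_i u_j whenever z_i = w_j. Define Γ ∈ ℂ^{N×N'} by Γ_{ij} := (x_i v_j − y_i u_j)/(w_j − z_i) if z_i ≠ w_j and Γ_{ij} := ρ_{ij} if z_i = w_j, and set Z := diag(z_1,…,z_N), W := diag(w_1,…,w_{N'}), X ∈ ℂ^{N×p} with rows x_i, Y ∈ ℂ^{N×m} with rows y_i, U ∈ ℂ^{m×N'} with columns u_j, V ∈ ℂ^{p×N'} with columns v_j. Then ΓW − ZΓ = XV − YU. -/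
open Matrix
open scoped Matrix Classical

/-! The Sylvester equation holds entrywise: off the resonances `z i = w j` the entry
`r / (w - z)` is multiplied by `w - z`, and on them `ρ` cancels while the right-hand side
vanishes by the compatibility condition. -/

section CouplingMatrix

variable {K ι κ : Type*} [Field K] [DecidableEq K] [Fintype ι] [Fintype κ]
  [DecidableEq ι] [DecidableEq κ]

def couplingMatrix (z : ι → K) (w : κ → K) (r ρ : ι → κ → K) : Matrix ι κ K :=
  of fun i j => if z i = w j then ρ i j else r i j / (w j - z i)

theorem couplingMatrix_mul_diagonal_sub_diagonal_mul (z : ι → K) (w : κ → K)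
    (r ρ : ι → κ → K) (hr : ∀ i j, z i = w j → r i j = 0) :
    couplingMatrix z w r ρ * diagonal w - diagonal z * couplingMatrix z w r ρ = of r := by
  ext i j
  simp only [couplingMatrix, Matrix.sub_apply, mul_diagonal, diagonal_mul, of_apply]
  split_ifs with h
  · rw [h, hr i j h]; ring
  · field_simp [sub_ne_zero.mpr (Ne.symm h)]

end CouplingMatrix

/-- **Sylvester equation for the simple-multiplicity coupling matrix.**
Under the compatibility condition `x_i v_j = y_i u_j` whenever `z_i = w_j`, the coupling
matrix `Γ` satisfies `ΓW − ZΓ = XV − YU`. -/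
theorem coupling_matrix_sylvester
    (p m N N' : ℕ)
    (z : Fin N → ℂ) (w : Fin N' → ℂ)
    (x : Fin N → Fin p → ℂ) (y : Fin N → Fin m → ℂ)
    (u : Fin N' → Fin m → ℂ) (v : Fin N' → Fin p → ℂ)
    (ρ : Fin N → Fin N' → ℂ)
    (hcompat : ∀ i j, z i = w j → x i ⬝ᵥ v j = y i ⬝ᵥ u j) :
    let Γ : Matrix (Fin N) (Fin N') ℂ :=
      Matrix.of fun i j =>
        if z i = w j then ρ i j else (x i ⬝ᵥ v j - y i ⬝ᵥ u j) / (w j - z i)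
    let Z : Matrix (Fin N) (Fin N) ℂ := Matrix.diagonal z
    let W : Matrix (Fin N') (Fin N') ℂ := Matrix.diagonal w
    let X : Matrix (Fin N) (Fin p) ℂ := Matrix.of x
    let Y : Matrix (Fin N) (Fin m) ℂ := Matrix.of y
    let U : Matrix (Fin m) (Fin N') ℂ := Matrix.of fun k j => u j k
    let V : Matrix (Fin p) (Fin N') ℂ := Matrix.of fun k j => v j k
    Γ * W - Z * Γ = X * V - Y * U := by
  intro Γ Z W X Y U V
  have hΓ : Γ = couplingMatrix z w (fun i j => x i ⬝ᵥ v j - y i ⬝ᵥ u j) ρ := rfl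
  rw [hΓ, couplingMatrix_mul_diagonal_sub_diagonal_mul z w _ ρ
    fun i j h => sub_eq_zero.mpr (hcompat i j h)]
  rfl
end
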